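/- Identification of the generalized local average controlled spillover effect with own treatment fixed at 0 (Theorem 3.1, item 1, d = 0): let 0 ≤ p₀ ≤ 1 and 0 ≤ p₁ < p₁' ≤ 1 with ℙ(V₀ > p₀ and p₁ < V₁ ≤ p₁') > 0. Then (p₁' − p₁) − (C(p₀,p₁') − C(p₀,p₁)) = ℙ(V₀ > p₀ and p₁ < V₁ ≤ p₁'), and (F⁰(p₀,p₁') − F⁰(p₀,p₁)) / ((p₁' − p₁) − (C(p₀,p₁') − C(p₀,p₁))) = 𝔼[ m(0,1,U) − m(0,0,U) | V₀ > p₀ and p₁ < V₁ ≤ p₁' ], the local average controlled spillover effect LACSE^{(0)} for the subpopulation {V₀ > p₀, p₁ < V₁ ≤ p₁'}. -/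
import Mathlib


open MeasureTheory ProbabilityTheory

/-- Identification of the generalized local average controlled spillover effect with own
treatment fixed at 0 (Theorem 3.1, item 1, d = 0). -/
theorem lacse_zero_identification
    {Ω 𝒰 : Type*} [MeasurableSpace Ω] [MeasurableSpace 𝒰]
    (μ : Measure Ω) [IsProbabilityMeasure μ]
    (U : Ω → 𝒰) (V₀ V₁ : Ω → ℝ)
    (hU : Measurable U) (hV₀ : Measurable V₀) (hV₁ : Measurable V₁)
    -- V₀, V₁ uniformly distributed on (0,1)
    (hV₀unif : Measure.map V₀ μ = volume.restrict (Set.Ioo (0:ℝ) 1))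
    (hV₁unif : Measure.map V₁ μ = volume.restrict (Set.Ioo (0:ℝ) 1))
    -- bounded measurable outcome function (`true` codes treatment 1, `false` codes 0)
    (m : Bool → Bool → 𝒰 → ℝ) (hm : ∀ d d', Measurable (m d d'))
    (hm_bdd : ∃ B, ∀ d d' u, |m d d' u| ≤ B)
    -- the copula of (V₀, V₁)
    (C : ℝ → ℝ → ℝ)
    (hC : ∀ p q, C p q = (μ {ω | V₀ ω ≤ p ∧ V₁ ω ≤ q}).toReal)
    -- identified conditional-mean function F⁰
    (F0 : ℝ → ℝ → ℝ)
    (hF0 : ∀ p q, F0 p q =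
      (∫ ω, m false true (U ω) * (if p < V₀ ω then (1:ℝ) else 0)
        * (if V₁ ω ≤ q then (1:ℝ) else 0) ∂μ)
      + ∫ ω, m false false (U ω) * (if p < V₀ ω then (1:ℝ) else 0)
        * (if q < V₁ ω then (1:ℝ) else 0) ∂μ)
    -- the propensity-score values
    (p₀ p₁ p₁' : ℝ) (hp₀0 : 0 ≤ p₀) (hp₀1 : p₀ ≤ 1)
    (hp₁0 : 0 ≤ p₁) (hp₁lt : p₁ < p₁') (hp₁'1 : p₁' ≤ 1)
    -- the conditioning subpopulation {V₀ > p₀, p₁ < V₁ ≤ p₁'} has positive probability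
    (E : Set Ω) (hE : E = {ω | p₀ < V₀ ω ∧ p₁ < V₁ ω ∧ V₁ ω ≤ p₁'})
    (hEpos : 0 < μ E) :
    (p₁' - p₁) - (C p₀ p₁' - C p₀ p₁) = (μ E).toReal ∧
    (F0 p₀ p₁' - F0 p₀ p₁) / ((p₁' - p₁) - (C p₀ p₁' - C p₀ p₁))
      = (∫ ω in E, (m false true (U ω) - m false false (U ω)) ∂μ) / (μ E).toReal := by
  -- basic measurable sets
  have hA : MeasurableSet {ω | p₀ < V₀ ω} := measurableSet_lt measurable_const hV₀
  have hB : ∀ q : ℝ, MeasurableSet {ω | V₁ ω ≤ q} :=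
    fun q => measurableSet_le hV₁ measurable_const
  have hBc : ∀ q : ℝ, MeasurableSet {ω | q < V₁ ω} :=
    fun q => measurableSet_lt measurable_const hV₁
  -- the uniform law of V₁
  have hlaw : ∀ q : ℝ, 0 ≤ q → q ≤ 1 → μ {ω | V₁ ω ≤ q} = ENNReal.ofReal q := by
    intro q hq0 hq1
    have hpre : {ω | V₁ ω ≤ q} = V₁ ⁻¹' Set.Iic q := rfl
    rw [hpre, ← Measure.map_apply hV₁ measurableSet_Iic, hV₁unif,
      Measure.restrict_apply measurableSet_Iic]
    apply le_antisymm
    · calc volume (Set.Iic q ∩ Set.Ioo 0 1) ≤ volume (Set.Ioc 0 q) := by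
            apply measure_mono
            rintro x ⟨hx1, hx2, hx3⟩
            exact ⟨hx2, hx1⟩
          _ = ENNReal.ofReal q := by simp [Real.volume_Ioc]
    · calc ENNReal.ofReal q = volume (Set.Ioo 0 q) := by simp [Real.volume_Ioo]
          _ ≤ volume (Set.Iic q ∩ Set.Ioo 0 1) := by
            apply measure_mono
            rintro x ⟨hx1, hx2⟩
            exact ⟨le_of_lt hx2, hx1, lt_of_lt_of_le hx2 hq1⟩
  -- split {V₁ ≤ q} according to V₀ ≤ p₀ / p₀ < V₀
  have hsplit : ∀ q : ℝ, μ {ω | V₀ ω ≤ p₀ ∧ V₁ ω ≤ q}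
      + μ ({ω | p₀ < V₀ ω} ∩ {ω | V₁ ω ≤ q}) = μ {ω | V₁ ω ≤ q} := by
    intro q
    have h := measure_inter_add_diff (μ := μ) (t := {ω | V₀ ω ≤ p₀}) {ω | V₁ ω ≤ q}
      (measurableSet_le hV₀ measurable_const)
    have e1 : {ω | V₁ ω ≤ q} ∩ {ω | V₀ ω ≤ p₀} = {ω | V₀ ω ≤ p₀ ∧ V₁ ω ≤ q} := by
      ext ω; simp [Set.mem_setOf_eq, and_comm]
    have e2 : {ω | V₁ ω ≤ q} \ {ω | V₀ ω ≤ p₀} = {ω | p₀ < V₀ ω} ∩ {ω | V₁ ω ≤ q} := by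
      ext ω; simp [Set.mem_setOf_eq, Set.mem_diff, not_le, and_comm]
    rw [← e1, ← e2]; exact h
  -- value of the "upper cell" measure in terms of the copula
  have hcell : ∀ q : ℝ, 0 ≤ q → q ≤ 1 →
      (μ ({ω | p₀ < V₀ ω} ∩ {ω | V₁ ω ≤ q})).toReal = q - C p₀ q := by
    intro q hq0 hq1
    have h := hsplit q
    rw [hlaw q hq0 hq1] at h
    have := congrArg ENNReal.toReal h
    rw [ENNReal.toReal_add (measure_ne_top μ _) (measure_ne_top μ _),
      ENNReal.toReal_ofReal hq0] at this
    rw [hC p₀ q]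
    linarith
  -- E as a set difference
  subst hE
  have hEeq : {ω | p₀ < V₀ ω ∧ p₁ < V₁ ω ∧ V₁ ω ≤ p₁'}
      = ({ω | p₀ < V₀ ω} ∩ {ω | V₁ ω ≤ p₁'}) \ ({ω | p₀ < V₀ ω} ∩ {ω | V₁ ω ≤ p₁}) := by
    ext ω
    simp only [Set.mem_setOf_eq, Set.mem_diff, Set.mem_inter_iff, not_and, not_le]
    constructor
    · rintro ⟨h0, h1, h2⟩; exact ⟨⟨h0, h2⟩, fun _ => h1⟩
    · rintro ⟨⟨h0, h2⟩, h1⟩; exact ⟨h0, h1 h0, h2⟩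
  have hsub : ({ω | p₀ < V₀ ω} ∩ {ω | V₁ ω ≤ p₁}) ⊆ ({ω | p₀ < V₀ ω} ∩ {ω | V₁ ω ≤ p₁'}) := by
    rintro ω ⟨h0, h1⟩; exact ⟨h0, h1.trans hp₁lt.le⟩
  -- measure of E
  have hmeasE : (μ {ω | p₀ < V₀ ω ∧ p₁ < V₁ ω ∧ V₁ ω ≤ p₁'}).toReal
      = (μ ({ω | p₀ < V₀ ω} ∩ {ω | V₁ ω ≤ p₁'})).toReal
        - (μ ({ω | p₀ < V₀ ω} ∩ {ω | V₁ ω ≤ p₁})).toReal := by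
    rw [hEeq]
    rw [measure_diff hsub ((hA.inter (hB p₁)).nullMeasurableSet) (measure_ne_top μ _)]
    rw [ENNReal.toReal_sub_of_le (measure_mono hsub) (measure_ne_top μ _)]
  have part1 : (p₁' - p₁) - (C p₀ p₁' - C p₀ p₁)
      = (μ {ω | p₀ < V₀ ω ∧ p₁ < V₁ ω ∧ V₁ ω ≤ p₁'}).toReal := by
    rw [hmeasE, hcell p₁' (hp₁0.trans hp₁lt.le) hp₁'1, hcell p₁ hp₁0 (hp₁lt.le.trans hp₁'1)]
    ring
  -- integrability
  obtain ⟨Bd, hBd⟩ := hm_bdd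
  have hint : ∀ d d' : Bool, Integrable (fun ω => m d d' (U ω)) μ := fun d d' =>
    Integrable.mono' (integrable_const Bd) ((hm d d').comp hU).aestronglyMeasurable
      (ae_of_all _ fun ω => hBd d d' (U ω))
  -- rewrite products of indicators as set integrals
  have hrw1 : ∀ (d d' : Bool) (q : ℝ),
      (∫ ω, m d d' (U ω) * (if p₀ < V₀ ω then (1:ℝ) else 0)
        * (if V₁ ω ≤ q then (1:ℝ) else 0) ∂μ)
      = ∫ ω in {ω | p₀ < V₀ ω} ∩ {ω | V₁ ω ≤ q}, m d d' (U ω) ∂μ := by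
    intro d d' q
    rw [← integral_indicator (hA.inter (hB q))]
    congr 1
    ext ω
    by_cases h1 : p₀ < V₀ ω <;> by_cases h2 : V₁ ω ≤ q <;>
      simp [Set.indicator, Set.mem_setOf_eq, h1, h2]
  have hrw2 : ∀ (d d' : Bool) (q : ℝ),
      (∫ ω, m d d' (U ω) * (if p₀ < V₀ ω then (1:ℝ) else 0)
        * (if q < V₁ ω then (1:ℝ) else 0) ∂μ)
      = ∫ ω in {ω | p₀ < V₀ ω} ∩ {ω | q < V₁ ω}, m d d' (U ω) ∂μ := by
    intro d d' q
    rw [← integral_indicator (hA.inter (hBc q))]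
    congr 1
    ext ω
    by_cases h1 : p₀ < V₀ ω <;> by_cases h2 : q < V₁ ω <;>
      simp [Set.indicator, Set.mem_setOf_eq, h1, h2]
  -- set differences for the two integrals
  have hEeq2 : {ω | p₀ < V₀ ω ∧ p₁ < V₁ ω ∧ V₁ ω ≤ p₁'}
      = ({ω | p₀ < V₀ ω} ∩ {ω | p₁ < V₁ ω}) \ ({ω | p₀ < V₀ ω} ∩ {ω | p₁' < V₁ ω}) := by
    ext ω
    simp only [Set.mem_setOf_eq, Set.mem_diff, Set.mem_inter_iff, not_and, not_lt]
    constructor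
    · rintro ⟨h0, h1, h2⟩; exact ⟨⟨h0, h1⟩, fun _ => h2⟩
    · rintro ⟨⟨h0, h1⟩, h2⟩; exact ⟨h0, h1, h2 h0⟩
  have hsub2 : ({ω | p₀ < V₀ ω} ∩ {ω | p₁' < V₁ ω}) ⊆ ({ω | p₀ < V₀ ω} ∩ {ω | p₁ < V₁ ω}) := by
    rintro ω ⟨h0, h1⟩; exact ⟨h0, hp₁lt.trans h1⟩
  -- numerator identity
  have hnum : F0 p₀ p₁' - F0 p₀ p₁
      = ∫ ω in {ω | p₀ < V₀ ω ∧ p₁ < V₁ ω ∧ V₁ ω ≤ p₁'},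
          (m false true (U ω) - m false false (U ω)) ∂μ := by
    have hd1 : ∫ ω in {ω | p₀ < V₀ ω ∧ p₁ < V₁ ω ∧ V₁ ω ≤ p₁'}, m false true (U ω) ∂μ
        = (∫ ω in {ω | p₀ < V₀ ω} ∩ {ω | V₁ ω ≤ p₁'}, m false true (U ω) ∂μ)
          - ∫ ω in {ω | p₀ < V₀ ω} ∩ {ω | V₁ ω ≤ p₁}, m false true (U ω) ∂μ := by
      rw [hEeq]
      exact integral_diff (hA.inter (hB p₁)) ((hint false true).integrableOn) hsub
    have hd2 : ∫ ω in {ω | p₀ < V₀ ω ∧ p₁ < V₁ ω ∧ V₁ ω ≤ p₁'}, m false false (U ω) ∂μ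
        = (∫ ω in {ω | p₀ < V₀ ω} ∩ {ω | p₁ < V₁ ω}, m false false (U ω) ∂μ)
          - ∫ ω in {ω | p₀ < V₀ ω} ∩ {ω | p₁' < V₁ ω}, m false false (U ω) ∂μ := by
      rw [hEeq2]
      exact integral_diff (hA.inter (hBc p₁')) ((hint false false).integrableOn) hsub2
    rw [integral_sub ((hint false true).integrableOn) ((hint false false).integrableOn),
      hd1, hd2, hF0 p₀ p₁', hF0 p₀ p₁, hrw1, hrw1, hrw2, hrw2]
    ring
  exact ⟨part1, by rw [part1, hnum]⟩
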